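/- There exist absolute constants υ ≥ 1, CONST ≥ 1 and a positive integer m₀ such that the following holds: for every integer m ≥ m₀, every real F with 1 ≤ F ≤ υ·log(m)/log(log(m)), every positive integer d, and all integers i, t with 1 ≤ i ≤ 2m, i ≤ d, 1 ≤ t ≤ i/2, and (i−2t)² < 2(3t−i), one has |W_{[i],t}| ≤ CONST^{2m} · i! · m^{4m+i−5t} · (1/F)^{4m−2i}. -/

import Mathlib

open Finset MeasureTheory ProbabilityTheory

noncomputable section

/-- The set of sequences `S = (S_1, …, S_{2m})` of pairs `S_j = (S_{j,1}, S_{j,2})` of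
integers with `1 ≤ S_{j,1} < S_{j,2} ≤ d` (realized as elements of `Fin d`). -/
def Seqs (d m : ℕ) : Set (Fin (2*m) → Fin d × Fin d) :=
  {S | ∀ j, (S j).1 < (S j).2}

/-- The simple graph underlying the multigraph `G(S)`: `a ≠ b` are adjacent iff some pair
of the sequence `S` equals `(a,b)` or `(b,a)`. -/
def graphOf {d m : ℕ} (S : Fin (2*m) → Fin d × Fin d) : SimpleGraph (Fin d) where
  Adj a b := a ≠ b ∧ ∃ j, S j = (a, b) ∨ S j = (b, a)
  symm := ⟨fun _ _ ⟨hab, j, h⟩ => ⟨hab.symm, j, h.symm⟩⟩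
  loopless := ⟨fun _ ⟨h, _⟩ => h rfl⟩

/-- `Ver(G(S))`: the set of integers occurring in the sequence `S`, i.e. the vertices of
`G(S)` (all of which have positive degree). -/
def Ver {d m : ℕ} (S : Fin (2*m) → Fin d × Fin d) : Finset (Fin d) :=
  univ.filter (fun v => ∃ j, (S j).1 = v ∨ (S j).2 = v)

/-- The degree of `v` in the multigraph `G(S)`: the number of pairs `(j,a)` with
`S_{j,a} = v`. -/
def deg {d m : ℕ} (S : Fin (2*m) → Fin d × Fin d) (v : Fin d) : ℕ :=
  (univ.filter (fun j => (S j).1 = v)).card + (univ.filter (fun j => (S j).2 = v)).card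

open scoped Classical in
/-- The number of connected components of the multigraph `G(S)`, i.e. the number of
connected components of the underlying simple graph that meet `Ver(G(S))`. -/
def numComp {d m : ℕ} (S : Fin (2*m) → Fin d × Fin d) : ℕ :=
  ((Ver S).image (fun v => (graphOf S).connectedComponentMk v)).card

/-- `[i] = {1, …, i}`, realized as the first `i` elements of `Fin d`. -/
def seg (d i : ℕ) : Finset (Fin d) := univ.filter (fun v => (v : ℕ) < i)

/-- `W_{Q,t}`: the set of sequences `S` with `Ver(G(S)) = Q`, all degrees of `G(S)`
positive and even, and `G(S)` having exactly `t` connected components. -/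
def W (d m : ℕ) (Q : Finset (Fin d)) (t : ℕ) : Set (Fin (2*m) → Fin d × Fin d) :=
  {S | S ∈ Seqs d m ∧ Ver S = Q ∧ (∀ v ∈ Ver S, 0 < deg S v ∧ Even (deg S v)) ∧
    numComp S = t}

/-!
Send a sequence `S` to the map `ψ` taking each vertex of `G(S)` to the least vertex of its
connected component. Since `G(S)` has `t` components and every vertex has a neighbour, `ψ` is a
retraction of `[i]` onto `t` points whose fibres have at least two elements; there are at most
`C(i,t) t^(i-t)` such maps. Given `ψ`, each pair `S_j` lies inside one fibre, so it ranges over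
`∑ n_u² ≤ 4t + 4k + k²` pairs, where `n_u ≥ 2` are the fibre sizes and `k = i - 2t`; the
hypothesis `k² + 2k < 2t` makes this at most `8t`. Hence `|W_{[i],t}| ≤ C(i,t) t^(i-t) (8t)^(2m)`.
Finally `F ≤ log m ≤ 2√m` turns `F^(4m-2i)` into at most `(4m)^(2m-i)`, and `t^i ≤ i^i ≤ 3^i i!`
produces the factorial.
-/

namespace SeqGraph

section Retractions

variable {α : Type*} [Fintype α] [DecidableEq α] {Q : Finset α} {t k : ℕ} {ψ : α → α}

/-- `ψ ∈ retractions Q t` encodes a partition of `Q` into `t` blocks of size at least two: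
the blocks are the fibres of `ψ` on `Q`, each represented by its unique fixed point. -/
def retractions (Q : Finset α) (t : ℕ) : Finset (α → α) :=
  {ψ | (∀ v ∉ Q, ψ v = v) ∧ (∀ v ∈ Q, ψ v ∈ Q ∧ ψ (ψ v) = ψ v) ∧
    #{v ∈ Q | ψ v = v} = t ∧ ∀ u ∈ Q, ψ u = u → 2 ≤ #{v ∈ Q | ψ v = u}}

theorem card_retractions_le (Q : Finset α) (t : ℕ) :
    #(retractions Q t) ≤ (#Q).choose t * t ^ (#Q - t) := by
  have hfix : ∀ ψ ∈ retractions Q t, {v ∈ Q | ψ v = v} ∈ Q.powersetCard t := fun ψ hψ =>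
    mem_powersetCard.2 ⟨filter_subset _ _, (mem_filter.1 hψ).2.2.2.1⟩
  have hfibre : ∀ M ∈ Q.powersetCard t,
      #{ψ ∈ retractions Q t | {v ∈ Q | ψ v = v} = M} ≤ t ^ (#Q - t) := by
    intro M hM
    obtain ⟨hMQ, hMcard⟩ := mem_powersetCard.1 hM
    calc #{ψ ∈ retractions Q t | {v ∈ Q | ψ v = v} = M}
        ≤ #(Fintype.piFinset fun v => if v ∈ Q \ M then M else {v}) := by
          refine card_le_card fun ψ hψ => Fintype.mem_piFinset.2 fun v => ?_
          obtain ⟨hψR, rfl⟩ := mem_filter.1 hψ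
          obtain ⟨-, hid, hret, -, -⟩ := mem_filter.1 hψR
          by_cases hv : v ∈ Q
          · by_cases hvM : ψ v = v
            · simp [hv, hvM]
            · simp [hv, hvM, hret v hv]
          · simp [hv, hid v hv]
      _ = t ^ (#Q - t) := by
          simp only [Fintype.card_piFinset, apply_ite card, card_singleton, hMcard,
            prod_ite_mem, univ_inter, prod_const, card_sdiff_of_subset hMQ]
  calc #(retractions Q t)
      = ∑ M ∈ Q.powersetCard t, #{ψ ∈ retractions Q t | {v ∈ Q | ψ v = v} = M} :=
        card_eq_sum_card_fiberwise hfix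
    _ ≤ ∑ M ∈ Q.powersetCard t, t ^ (#Q - t) := sum_le_sum hfibre
    _ = (#Q).choose t * t ^ (#Q - t) := by rw [sum_const, card_powersetCard, smul_eq_mul]

def fiberPairs (Q : Finset α) (ψ : α → α) : Finset (α × α) :=
  {p ∈ Q ×ˢ Q | ψ p.1 = ψ p.2}

theorem card_fiberPairs (hψ : ψ ∈ retractions Q t) :
    #(fiberPairs Q ψ) = ∑ u ∈ {v ∈ Q | ψ v = v}, #{v ∈ Q | ψ v = u} ^ 2 := by
  obtain ⟨-, -, hret, -, -⟩ := mem_filter.1 hψ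
  have hmaps : ∀ p ∈ fiberPairs Q ψ, ψ p.1 ∈ {v ∈ Q | ψ v = v} := fun p hp => by
    have hp1 := (mem_product.1 (mem_filter.1 hp).1).1
    exact mem_filter.2 (hret _ hp1)
  rw [card_eq_sum_card_fiberwise hmaps]
  refine sum_congr rfl fun u _ => ?_
  have hfibre : {p ∈ fiberPairs Q ψ | ψ p.1 = u} =
      {v ∈ Q | ψ v = u} ×ˢ {v ∈ Q | ψ v = u} := by
    ext ⟨a, b⟩
    simp only [fiberPairs, mem_filter, mem_product]
    constructor
    · rintro ⟨⟨⟨ha, hb⟩, hab⟩, rfl⟩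
      exact ⟨⟨ha, rfl⟩, hb, hab.symm⟩
    · rintro ⟨⟨ha, rfl⟩, hb, hba⟩
      exact ⟨⟨⟨ha, hb⟩, hba.symm⟩, rfl⟩
  rw [hfibre, card_product, sq]

theorem sum_sq_le_of_two_le {ι : Type*} (s : Finset ι) (n : ι → ℕ) (h2 : ∀ u ∈ s, 2 ≤ n u)
    (hsum : ∑ u ∈ s, n u = 2 * #s + k) : ∑ u ∈ s, n u ^ 2 ≤ 4 * #s + 4 * k + k ^ 2 := by
  have hn : ∀ u ∈ s, n u = (n u - 2) + 2 := fun u hu => by have := h2 u hu; omega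
  have hexcess : ∑ u ∈ s, (n u - 2) = k := by
    have : ∑ u ∈ s, n u = ∑ u ∈ s, (n u - 2) + 2 * #s := by
      rw [sum_congr rfl hn, sum_add_distrib, sum_const, smul_eq_mul, mul_comm]
    omega
  calc ∑ u ∈ s, n u ^ 2 = ∑ u ∈ s, (n u - 2) ^ 2 + 4 * ∑ u ∈ s, (n u - 2) + 4 * #s := by
        rw [mul_sum, ← sum_add_distrib, mul_comm 4, ← smul_eq_mul, ← sum_const,
          ← sum_add_distrib]
        refine sum_congr rfl fun u hu => ?_
        obtain ⟨x, hx⟩ := Nat.exists_eq_add_of_le' (h2 u hu)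
        rw [hx, Nat.add_sub_cancel]
        ring
    _ ≤ k ^ 2 + 4 * k + 4 * #s := by
        rw [hexcess, ← hexcess]
        gcongr
        exact sum_sq_le_sq_sum_of_nonneg fun _ _ => Nat.zero_le _
    _ = 4 * #s + 4 * k + k ^ 2 := by ring

theorem card_fiberPairs_le (hψ : ψ ∈ retractions Q t) (hQ : #Q = 2 * t + k) :
    #(fiberPairs Q ψ) ≤ 4 * t + 4 * k + k ^ 2 := by
  obtain ⟨-, -, hret, hcard, hfibre⟩ := mem_filter.1 hψ
  have hsum : ∑ u ∈ {v ∈ Q | ψ v = v}, #{v ∈ Q | ψ v = u} = 2 * #{v ∈ Q | ψ v = v} + k := by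
    rw [hcard, ← hQ]
    exact (card_eq_sum_card_fiberwise fun v hv => mem_filter.2 (hret v hv)).symm
  rw [card_fiberPairs hψ, ← hcard]
  exact sum_sq_le_of_two_le _ _ (fun u hu => hfibre u (mem_filter.1 hu).1 (mem_filter.1 hu).2) hsum

end Retractions

section Leader

variable {V : Type*} (G : SimpleGraph V) (Q : Finset V) {u v : V}

open scoped Classical in
def component (v : V) : Finset V :=
  {u ∈ Q | G.connectedComponentMk u = G.connectedComponentMk v}

theorem mem_component : u ∈ component G Q v ↔ u ∈ Q ∧ G.Reachable u v := by
  simp [component, SimpleGraph.ConnectedComponent.eq]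

theorem component_congr (h : G.Reachable u v) : component G Q u = component G Q v := by
  ext w
  simp only [mem_component]
  exact and_congr_right fun _ => ⟨fun hw => hw.trans h, fun hw => hw.trans h.symm⟩

variable [LinearOrder V]

def leader (v : V) : V :=
  if hv : v ∈ Q then (component G Q v).min' ⟨v, (mem_component G Q).2 ⟨hv, .rfl⟩⟩ else v

variable {G Q}

theorem leader_of_notMem (hv : v ∉ Q) : leader G Q v = v := dif_neg hv

theorem leader_mem_component (hv : v ∈ Q) : leader G Q v ∈ component G Q v := by
  rw [leader, dif_pos hv]
  exact min'_mem _ _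

theorem leader_mem (hv : v ∈ Q) : leader G Q v ∈ Q :=
  ((mem_component G Q).1 (leader_mem_component hv)).1

theorem reachable_leader (hv : v ∈ Q) : G.Reachable (leader G Q v) v :=
  ((mem_component G Q).1 (leader_mem_component hv)).2

theorem leader_eq_of_reachable (hu : u ∈ Q) (hv : v ∈ Q) (h : G.Reachable u v) :
    leader G Q u = leader G Q v := by
  simp only [leader, dif_pos hu, dif_pos hv, component_congr G Q h]

theorem leader_leader (hv : v ∈ Q) : leader G Q (leader G Q v) = leader G Q v :=
  leader_eq_of_reachable (leader_mem hv) hv (reachable_leader hv)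

open scoped Classical in
theorem leader_mem_retractions [Fintype V] {t : ℕ} (ht : #(Q.image G.connectedComponentMk) = t)
    (hpair : ∀ v ∈ Q, ∃ w ∈ Q, w ≠ v ∧ G.Reachable w v) : leader G Q ∈ retractions Q t := by
  refine mem_filter.2 ⟨mem_univ _, fun v hv => leader_of_notMem hv,
    fun v hv => ⟨leader_mem hv, leader_leader hv⟩, ?_, ?_⟩
  · have hinj : Set.InjOn G.connectedComponentMk ({v ∈ Q | leader G Q v = v} : Finset V) := by
      intro u hu v hv huv
      simp only [mem_coe, mem_filter] at hu hv
      rw [← hu.2, ← hv.2]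
      exact leader_eq_of_reachable hu.1 hv.1 (SimpleGraph.ConnectedComponent.exact huv)
    have himage : {v ∈ Q | leader G Q v = v}.image G.connectedComponentMk =
        Q.image G.connectedComponentMk := by
      refine (image_subset_image (filter_subset _ _)).antisymm fun c hc => ?_
      obtain ⟨v, hv, rfl⟩ := mem_image.1 hc
      exact mem_image.2 ⟨leader G Q v, mem_filter.2 ⟨leader_mem hv, leader_leader hv⟩,
        SimpleGraph.ConnectedComponent.sound (reachable_leader hv)⟩
    rw [← ht, ← himage, card_image_of_injOn hinj]
  · intro u hu hfix
    obtain ⟨w, hw, hwu, hreach⟩ := hpair u hu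
    refine one_lt_card.2 ⟨u, mem_filter.2 ⟨hu, hfix⟩, w, mem_filter.2 ⟨hw, ?_⟩, hwu.symm⟩
    rw [leader_eq_of_reachable hw hu hreach, hfix]

end Leader

section Sequences

variable {d m t : ℕ} {Q : Finset (Fin d)} {S : Fin (2 * m) → Fin d × Fin d}

theorem card_seg {i : ℕ} (hi : i ≤ d) : #(seg d i) = i := by
  rw [seg, Fin.card_filter_val_lt, min_eq_right hi]

theorem fst_mem_Ver (j : Fin (2 * m)) : (S j).1 ∈ Ver S :=
  mem_filter.2 ⟨mem_univ _, j, .inl rfl⟩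

theorem snd_mem_Ver (j : Fin (2 * m)) : (S j).2 ∈ Ver S :=
  mem_filter.2 ⟨mem_univ _, j, .inr rfl⟩

theorem reachable_of_mem_Seqs (hS : S ∈ Seqs d m) (j : Fin (2 * m)) :
    (graphOf S).Reachable (S j).1 (S j).2 :=
  SimpleGraph.Adj.reachable ⟨(hS j).ne, j, .inl rfl⟩

theorem exists_ne_reachable_of_mem_Ver (hS : S ∈ Seqs d m) {v : Fin d} (hv : v ∈ Ver S) :
    ∃ w ∈ Ver S, w ≠ v ∧ (graphOf S).Reachable w v := by
  obtain ⟨-, j, rfl | rfl⟩ := mem_filter.1 hv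
  · exact ⟨(S j).2, snd_mem_Ver j, (hS j).ne', (reachable_of_mem_Seqs hS j).symm⟩
  · exact ⟨(S j).1, fst_mem_Ver j, (hS j).ne, reachable_of_mem_Seqs hS j⟩

theorem leader_mem_retractions_of_mem_W (hS : S ∈ W d m Q t) :
    leader (graphOf S) Q ∈ retractions Q t := by
  obtain ⟨hSeq, rfl, -, rfl⟩ := hS
  exact leader_mem_retractions rfl fun v hv => exists_ne_reachable_of_mem_Ver hSeq hv

theorem mem_fiberPairs_of_mem_W (hS : S ∈ W d m Q t) (j : Fin (2 * m)) :
    S j ∈ fiberPairs Q (leader (graphOf S) Q) := by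
  obtain ⟨hSeq, rfl, -, -⟩ := hS
  exact mem_filter.2 ⟨mem_product.2 ⟨fst_mem_Ver j, snd_mem_Ver j⟩,
    leader_eq_of_reachable (fst_mem_Ver j) (snd_mem_Ver j) (reachable_of_mem_Seqs hSeq j)⟩

theorem ncard_W_le_sum (Q : Finset (Fin d)) (t : ℕ) :
    (W d m Q t).ncard ≤ ∑ ψ ∈ retractions Q t, #(fiberPairs Q ψ) ^ (2 * m) := by
  have hsub : W d m Q t ⊆ ((retractions Q t).biUnion fun ψ =>
      Fintype.piFinset fun _ : Fin (2 * m) => fiberPairs Q ψ : Finset _) :=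
    fun S hS => by
      rw [mem_coe, mem_biUnion]
      exact ⟨_, leader_mem_retractions_of_mem_W hS,
        Fintype.mem_piFinset.2 (mem_fiberPairs_of_mem_W hS)⟩
  calc (W d m Q t).ncard ≤ #((retractions Q t).biUnion fun ψ =>
        Fintype.piFinset fun _ : Fin (2 * m) => fiberPairs Q ψ) := by
        rw [← Set.ncard_coe_finset]
        exact Set.ncard_le_ncard hsub
    _ ≤ ∑ ψ ∈ retractions Q t, #(Fintype.piFinset fun _ : Fin (2 * m) => fiberPairs Q ψ) :=
        card_biUnion_le
    _ = ∑ ψ ∈ retractions Q t, #(fiberPairs Q ψ) ^ (2 * m) := by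
        simp only [Fintype.card_piFinset_const]

theorem ncard_W_le {k : ℕ} (hQ : #Q = 2 * t + k) (hk : k ^ 2 + 2 * k < 2 * t) :
    (W d m Q t).ncard ≤ (#Q).choose t * t ^ (#Q - t) * (8 * t) ^ (2 * m) := by
  have hpairs : ∀ ψ ∈ retractions Q t, #(fiberPairs Q ψ) ≤ 8 * t := fun ψ hψ =>
    (card_fiberPairs_le hψ hQ).trans (by nlinarith)
  calc (W d m Q t).ncard ≤ ∑ ψ ∈ retractions Q t, #(fiberPairs Q ψ) ^ (2 * m) :=
        ncard_W_le_sum Q t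
    _ ≤ ∑ ψ ∈ retractions Q t, (8 * t) ^ (2 * m) := sum_le_sum fun ψ hψ => by
        gcongr; exact hpairs ψ hψ
    _ = #(retractions Q t) * (8 * t) ^ (2 * m) := by rw [sum_const, smul_eq_mul]
    _ ≤ (#Q).choose t * t ^ (#Q - t) * (8 * t) ^ (2 * m) := by
        gcongr; exact card_retractions_le Q t

end Sequences

section Estimates

open Real
open scoped Nat

theorem one_le_log_log {x : ℝ} (hx : 27 ≤ x) : 1 ≤ log (log x) := by
  have h3 : 3 ≤ log x := by
    rw [le_log_iff_exp_le (by linarith)]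
    calc exp 3 = exp 1 ^ 3 := by rw [← exp_nat_mul]; norm_num
      _ ≤ 3 ^ 3 := by gcongr; exact exp_one_lt_three.le
      _ ≤ x := by linarith
  rw [le_log_iff_exp_le (by linarith)]
  linarith [exp_one_lt_three]

theorem sq_le_four_mul_of_le_log_div_log_log {x F : ℝ} (hx : 27 ≤ x) (hF : 0 ≤ F)
    (hFx : F ≤ log x / log (log x)) : F ^ 2 ≤ 4 * x := by
  have hFlog : F ≤ log x :=
    hFx.trans (div_le_self (log_nonneg (by linarith)) (one_le_log_log hx))
  have hlog : log x ≤ 2 * √x := by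
    have := log_le_rpow_div (x := x) (ε := 1 / 2) (by linarith) (by norm_num)
    rwa [← sqrt_eq_rpow, div_eq_mul_inv, mul_comm, show ((1 : ℝ) / 2)⁻¹ = 2 by norm_num] at this
  calc F ^ 2 ≤ (2 * √x) ^ 2 := by gcongr; linarith
    _ = 4 * x := by rw [mul_pow, sq_sqrt (by linarith)]; norm_num

theorem pow_self_le_three_pow_mul_factorial (n : ℕ) : n ^ n ≤ 3 ^ n * n ! := by
  have h := pow_div_factorial_le_exp (n : ℝ) (Nat.cast_nonneg n) n
  have h3 : exp n ≤ 3 ^ n := by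
    rw [← exp_one_pow]
    gcongr
    exact exp_one_lt_three.le
  rw [div_le_iff₀ (by positivity)] at h
  have : (n : ℝ) ^ n ≤ 3 ^ n * n ! := h.trans (by gcongr)
  exact_mod_cast this

theorem choose_mul_pow_mul_pow_le {m i t : ℕ} (ht : 1 ≤ t) (hti : 2 * t ≤ i) (hi : i ≤ 2 * m) :
    i.choose t * t ^ (i - t) * (8 * t) ^ (2 * m) * (4 * m) ^ (2 * m - i) ≤
      192 ^ (2 * m) * i ! * m ^ (4 * m + i - 5 * t) := by
  have hsplit : t ^ (i - t) * t ^ (2 * m) = t ^ i * t ^ (2 * m - t) := by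
    rw [← pow_add, ← pow_add]
    congr 1
    omega
  have htpow : t ^ i ≤ 3 ^ (2 * m) * i ! :=
    calc t ^ i ≤ i ^ i := Nat.pow_le_pow_left (by omega) i
      _ ≤ 3 ^ i * i ! := pow_self_le_three_pow_mul_factorial i
      _ ≤ 3 ^ (2 * m) * i ! := by gcongr; norm_num
  calc i.choose t * t ^ (i - t) * (8 * t) ^ (2 * m) * (4 * m) ^ (2 * m - i)
      = i.choose t * 8 ^ (2 * m) * 4 ^ (2 * m - i) * (t ^ i * t ^ (2 * m - t)) *
          m ^ (2 * m - i) := by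
        rw [mul_pow, mul_pow, ← hsplit]
        ring
    _ ≤ 2 ^ (2 * m) * 8 ^ (2 * m) * 4 ^ (2 * m) * (3 ^ (2 * m) * i ! * m ^ (2 * m - t)) *
          m ^ (2 * m - i) := by
        gcongr
        · exact (Nat.choose_le_two_pow i t).trans (Nat.pow_le_pow_right two_pos hi)
        · norm_num
        · omega
        · omega
    _ = 192 ^ (2 * m) * i ! * m ^ (2 * m - t + (2 * m - i)) := by
        rw [show 192 = 2 * 8 * 4 * 3 from rfl, mul_pow, mul_pow, mul_pow, pow_add]
        ring
    _ ≤ 192 ^ (2 * m) * i ! * m ^ (4 * m + i - 5 * t) := by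
        gcongr
        · omega
        · omega

end Estimates

end SeqGraph

open SeqGraph

/-- (Counting lemma, large `t`.) There are absolute constants
`υ, CONST ≥ 1` and `m₀ ≥ 1` such that for every integer `m ≥ m₀`, every real
`1 ≤ F ≤ υ·log m/log log m`, every `d ≥ 1` and all integers `i, t` with `1 ≤ i ≤ 2m`,
`i ≤ d`, `1 ≤ t ≤ i/2` and `(i-2t)² < 2(3t-i)`:
`|W_{[i],t}| ≤ CONST^{2m} · i! · m^{4m+i-5t} · (1/F)^{4m-2i}`. -/
theorem statement19 :
    ∃ (υ CONST : ℝ) (m₀ : ℕ), 1 ≤ υ ∧ 1 ≤ CONST ∧ 0 < m₀ ∧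
      ∀ (m : ℕ), m₀ ≤ m →
      ∀ (F : ℝ), 1 ≤ F → F ≤ υ * Real.log m / Real.log (Real.log m) →
      ∀ (d : ℕ), 0 < d →
      ∀ (i t : ℕ), 1 ≤ i → i ≤ 2*m → i ≤ d →
      1 ≤ t → 2*t ≤ i →
      ((i : ℤ) - 2*(t : ℤ))^2 < 2*(3*(t : ℤ) - (i : ℤ)) →
        ((W d m (seg d i) t).ncard : ℝ) ≤
          CONST ^ (2*m) * (i.factorial : ℝ) *
            (m : ℝ) ^ (4*(m : ℤ) + (i : ℤ) - 5*(t : ℤ)) *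
            (F⁻¹) ^ (4*(m : ℤ) - 2*(i : ℤ)) := by
  refine ⟨1, 192, 27, le_rfl, by norm_num, by norm_num, ?_⟩
  intro m hm F hF1 hFlog d _ i t _ hi2m hid ht1 h2t hsq
  have hF : F ^ 2 ≤ 4 * m :=
    sq_le_four_mul_of_le_log_div_log_log (by exact_mod_cast hm) (by linarith) (by simpa using hFlog)
  have hk : (i - 2 * t) ^ 2 + 2 * (i - 2 * t) < 2 * t := by
    zify [h2t]
    linarith
  have hW := ncard_W_le (m := m) (by rw [card_seg hid]; omega) hk
  rw [card_seg hid] at hW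
  have he₁ : 4 * (m : ℤ) + i - 5 * t = ((4 * m + i - 5 * t : ℕ) : ℤ) := by omega
  have he₂ : 4 * (m : ℤ) - 2 * i = ((2 * (2 * m - i) : ℕ) : ℤ) := by omega
  rw [he₁, he₂, zpow_natCast, zpow_natCast, inv_pow, ← div_eq_mul_inv,
    le_div_iff₀ (by positivity), pow_mul]
  calc ((W d m (seg d i) t).ncard : ℝ) * (F ^ 2) ^ (2 * m - i)
      ≤ (W d m (seg d i) t).ncard * (4 * m) ^ (2 * m - i) := by gcongr
    _ ≤ 192 ^ (2 * m) * i.factorial * m ^ (4 * m + i - 5 * t) := by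
        exact_mod_cast (Nat.mul_le_mul_right _ hW).trans (choose_mul_pow_mul_pow_le ht1 h2t hi2m)

end
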